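/- A set of DPL formulas is saturated if and only if it is maximally consistent in H_DPL. -/
import Mathlib


open MeasureTheory
open scoped ENNReal

/-- Formulas of dynamic probability logic. -/
inductive DPLF : Type
  | var : ℕ → DPLF
  | neg : DPLF → DPLF
  | conj : DPLF → DPLF → DPLF
  | prob : ℚ → DPLF → DPLF
  | next : DPLF → DPLF
deriving DecidableEq

namespace DPLF

def falsum : DPLF := (var 0).conj (var 0).neg
def impl (φ ψ : DPLF) : DPLF := (φ.conj ψ.neg).neg
def disj (φ ψ : DPLF) : DPLF := (φ.neg.conj ψ.neg).neg
def iffF (φ ψ : DPLF) : DPLF := (φ.impl ψ).conj (ψ.impl φ)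

/-- n-fold application of the next operator. -/
def nextn : ℕ → DPLF → DPLF
  | 0, φ => φ
  | n+1, φ => (nextn n φ).next

/-- Iterated probability operators `L_{r₁ … r_k}`. -/
def probs : List ℚ → DPLF → DPLF
  | [], φ => φ
  | r :: rs, φ => prob r (probs rs φ)

/-- Propositional tautology: true under every Boolean valuation respecting ¬ and ∧. -/
def IsTautology (φ : DPLF) : Prop :=
  ∀ v : DPLF → Bool, (∀ ψ, v ψ.neg = !v ψ) →
    (∀ ψ χ, v (ψ.conj χ) = (v ψ && v χ)) → v φ = true

/-- Theoremhood in the Hilbert system `H⁻_DPL`. -/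
inductive Hm : DPLF → Prop
  | taut {φ : DPLF} : IsTautology φ → Hm φ
  | fa1 : Hm (prob 0 falsum)
  | fa2 {φ : DPLF} {r s : ℚ} : 0 ≤ r → r ≤ 1 → 0 ≤ s → s ≤ 1 → 1 < r + s →
      Hm (impl (prob r φ.neg) (prob s φ).neg)
  | fa3 {φ ψ : DPLF} {r s : ℚ} : 0 ≤ r → 0 ≤ s → r + s ≤ 1 →
      Hm (impl ((prob r (φ.conj ψ)).conj (prob s (φ.conj ψ.neg))) (prob (r+s) φ))
  | fa4 {φ ψ : DPLF} {r s : ℚ} : 0 ≤ r → 0 ≤ s → r + s ≤ 1 →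
      Hm (impl ((prob r (φ.conj ψ)).neg.conj (prob s (φ.conj ψ.neg)).neg) (prob (r+s) φ).neg)
  | mono {φ ψ : DPLF} {r : ℚ} : 0 ≤ r → r ≤ 1 →
      Hm (impl (prob 1 (impl φ ψ)) (impl (prob r φ) (prob r ψ)))
  | func {φ : DPLF} : Hm (iffF φ.neg.next φ.next.neg)
  | conjNext {φ ψ : DPLF} : Hm (iffF (φ.conj ψ).next (φ.next.conj ψ.next))
  | mp {φ ψ : DPLF} : Hm (impl φ ψ) → Hm φ → Hm ψ
  | arch {φ ψ : DPLF} {n : ℕ} {r : ℚ} : 0 ≤ r → r ≤ 1 →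
      (∀ s : ℚ, 0 ≤ s → s < r → Hm (impl ψ (nextn n (prob s φ)))) →
      Hm (impl ψ (nextn n (prob r φ)))
  | necL {φ : DPLF} : Hm φ → Hm (prob 1 φ)
  | necNext {φ : DPLF} : Hm φ → Hm φ.next

/-- Theoremhood in the Hilbert system `H_DPL` (with the generalized Archimedean rule). -/
inductive Hg : DPLF → Prop
  | taut {φ : DPLF} : IsTautology φ → Hg φ
  | fa1 : Hg (prob 0 falsum)
  | fa2 {φ : DPLF} {r s : ℚ} : 0 ≤ r → r ≤ 1 → 0 ≤ s → s ≤ 1 → 1 < r + s →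
      Hg (impl (prob r φ.neg) (prob s φ).neg)
  | fa3 {φ ψ : DPLF} {r s : ℚ} : 0 ≤ r → 0 ≤ s → r + s ≤ 1 →
      Hg (impl ((prob r (φ.conj ψ)).conj (prob s (φ.conj ψ.neg))) (prob (r+s) φ))
  | fa4 {φ ψ : DPLF} {r s : ℚ} : 0 ≤ r → 0 ≤ s → r + s ≤ 1 →
      Hg (impl ((prob r (φ.conj ψ)).neg.conj (prob s (φ.conj ψ.neg)).neg) (prob (r+s) φ).neg)
  | mono {φ ψ : DPLF} {r : ℚ} : 0 ≤ r → r ≤ 1 →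
      Hg (impl (prob 1 (impl φ ψ)) (impl (prob r φ) (prob r ψ)))
  | func {φ : DPLF} : Hg (iffF φ.neg.next φ.next.neg)
  | conjNext {φ ψ : DPLF} : Hg (iffF (φ.conj ψ).next (φ.next.conj ψ.next))
  | mp {φ ψ : DPLF} : Hg (impl φ ψ) → Hg φ → Hg ψ
  | garch {φ ψ : DPLF} {n : ℕ} {rs : List ℚ} {r : ℚ} : 0 ≤ r → r ≤ 1 →
      (∀ q ∈ rs, 0 ≤ q ∧ q ≤ 1) →
      (∀ s : ℚ, 0 ≤ s → s < r → Hg (impl ψ (nextn n (probs rs (prob s φ))))) →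
      Hg (impl ψ (nextn n (probs rs (prob r φ))))
  | necL {φ : DPLF} : Hg φ → Hg (prob 1 φ)
  | necNext {φ : DPLF} : Hg φ → Hg φ.next

/-- Derivability from assumptions in `H⁻_DPL` (no necessitation on assumptions). -/
inductive HmFrom (Γ : Set DPLF) : DPLF → Prop
  | assum {φ : DPLF} : φ ∈ Γ → HmFrom Γ φ
  | thm {φ : DPLF} : Hm φ → HmFrom Γ φ
  | mp {φ ψ : DPLF} : HmFrom Γ (impl φ ψ) → HmFrom Γ φ → HmFrom Γ ψ
  | arch {φ ψ : DPLF} {n : ℕ} {r : ℚ} : 0 ≤ r → r ≤ 1 →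
      (∀ s : ℚ, 0 ≤ s → s < r → HmFrom Γ (impl ψ (nextn n (prob s φ)))) →
      HmFrom Γ (impl ψ (nextn n (prob r φ)))

/-- Derivability from assumptions in `H_DPL` (no necessitation on assumptions). -/
inductive HgFrom (Γ : Set DPLF) : DPLF → Prop
  | assum {φ : DPLF} : φ ∈ Γ → HgFrom Γ φ
  | thm {φ : DPLF} : Hg φ → HgFrom Γ φ
  | mp {φ ψ : DPLF} : HgFrom Γ (impl φ ψ) → HgFrom Γ φ → HgFrom Γ ψ
  | garch {φ ψ : DPLF} {n : ℕ} {rs : List ℚ} {r : ℚ} : 0 ≤ r → r ≤ 1 →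
      (∀ q ∈ rs, 0 ≤ q ∧ q ≤ 1) →
      (∀ s : ℚ, 0 ≤ s → s < r → HgFrom Γ (impl ψ (nextn n (probs rs (prob s φ))))) →
      HgFrom Γ (impl ψ (nextn n (probs rs (prob r φ))))

/-- Consistency of a set of formulas in `H_DPL`. -/
def GConsistent (Γ : Set DPLF) : Prop := ¬ HgFrom Γ falsum

/-- Consistency of a set of formulas in `H⁻_DPL`. -/
def MConsistent (Γ : Set DPLF) : Prop := ¬ HmFrom Γ falsum

/-- Saturated sets of formulas. -/
structure Saturated (w : Set DPLF) : Prop where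
  fincon : ∀ Γ : Set DPLF, Γ ⊆ w → Γ.Finite → GConsistent Γ
  negcomplete : ∀ φ : DPLF, φ ∈ w ∨ φ.neg ∈ w
  archProp : ∀ (φ : DPLF) (n : ℕ) (rs : List ℚ) (r : ℚ), 0 ≤ r → r ≤ 1 →
    (∀ q ∈ rs, 0 ≤ q ∧ q ≤ 1) →
    (∀ s : ℚ, 0 ≤ s → s < r → nextn n (probs rs (prob s φ)) ∈ w) →
    nextn n (probs rs (prob r φ)) ∈ w

/-- The canonical space: all saturated sets. -/
def Omegac : Type := {w : Set DPLF // Saturated w}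

/-- The basic set `[φ]` of saturated sets containing `φ`. -/
def box (φ : DPLF) : Set Omegac := {w | φ ∈ w.1}

/-- The canonical base `B_c`. -/
def Bc : Set (Set Omegac) := {A | ∃ φ : DPLF, A = box φ}

/-- Dynamic Markov model. -/
structure DMM where
  World : Type
  σ : MeasurableSpace World
  T : World → @Measure World σ
  T_prob : ∀ w, IsProbabilityMeasure (T w)
  T_meas : ∀ A : Set World, MeasurableSet[σ] A →
    @Measurable World ℝ≥0∞ σ _ (fun w => T w A)
  f : World → World
  f_meas : @Measurable World World σ σ f
  v : ℕ → Set World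
  v_meas : ∀ p : ℕ, MeasurableSet[σ] (v p)

/-- Satisfaction in a dynamic Markov model. -/
def Sat (M : DMM) : DPLF → M.World → Prop
  | var p, w => w ∈ M.v p
  | neg φ, w => ¬ Sat M φ w
  | conj φ ψ, w => Sat M φ w ∧ Sat M ψ w
  | prob r φ, w => ENNReal.ofReal (r : ℝ) ≤ M.T w {u | Sat M φ u}
  | next φ, w => Sat M φ (M.f w)

end DPLF
section Aux
open DPLF

/-- Monotonicity of derivability. -/
lemma hgfrom_mono {Γ Δ : Set DPLF} (h : Γ ⊆ Δ) {φ : DPLF} (hd : HgFrom Γ φ) :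
    HgFrom Δ φ := by
  induction hd with
  | assum hm => exact .assum (h hm)
  | thm ht => exact .thm ht
  | mp _ _ ih1 ih2 => exact .mp ih1 ih2
  | garch hr0 hr1 hq _ ih => exact .garch hr0 hr1 hq ih

lemma tautId (φ : DPLF) : IsTautology (impl φ φ) := by
  intro v hn hc
  simp only [DPLF.impl, hn, hc]
  cases v φ <;> simp

lemma tautK (φ ψ : DPLF) : IsTautology (impl φ (impl ψ φ)) := by
  intro v hn hc
  simp only [DPLF.impl, hn, hc]
  cases v φ <;> cases v ψ <;> simp

lemma tautS (φ ψ χ : DPLF) :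
    IsTautology (impl (impl φ (impl ψ χ)) (impl (impl φ ψ) (impl φ χ))) := by
  intro v hn hc
  simp only [DPLF.impl, hn, hc]
  cases v φ <;> cases v ψ <;> cases v χ <;> simp

lemma tautEF (φ : DPLF) : IsTautology (impl φ (impl φ.neg falsum)) := by
  intro v hn hc
  simp only [DPLF.impl, DPLF.falsum, hn, hc]
  cases v φ <;> cases v (var 0) <;> simp

lemma tautCurry (φ ψ χ : DPLF) :
    IsTautology (impl (impl (φ.conj ψ) χ) (impl φ (impl ψ χ))) := by
  intro v hn hc
  simp only [DPLF.impl, hn, hc]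
  cases v φ <;> cases v ψ <;> cases v χ <;> simp

lemma tautUncurry (φ ψ χ : DPLF) :
    IsTautology (impl (impl φ (impl ψ χ)) (impl (φ.conj ψ) χ)) := by
  intro v hn hc
  simp only [DPLF.impl, hn, hc]
  cases v φ <;> cases v ψ <;> cases v χ <;> simp

lemma tautNotImp1 (φ ψ : DPLF) : IsTautology (impl (impl φ ψ).neg φ) := by
  intro v hn hc
  simp only [DPLF.impl, hn, hc]
  cases v φ <;> cases v ψ <;> simp

lemma tautNotImp2 (φ ψ : DPLF) : IsTautology (impl (impl φ ψ).neg ψ.neg) := by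
  intro v hn hc
  simp only [DPLF.impl, hn, hc]
  cases v φ <;> cases v ψ <;> simp

lemma tautCases (φ : DPLF) :
    IsTautology (impl (impl φ falsum) (impl (impl φ.neg falsum) falsum)) := by
  intro v hn hc
  simp only [DPLF.impl, DPLF.falsum, hn, hc]
  cases v φ <;> cases v (var 0) <;> simp

lemma tautTop : IsTautology falsum.neg := by
  intro v hn hc
  simp only [DPLF.falsum, hn, hc]
  cases v (var 0) <;> simp

/-- Deduction theorem for `HgFrom`. -/
lemma hgfrom_deduction {Γ : Set DPLF} {ψ φ : DPLF}
    (h : HgFrom (insert ψ Γ) φ) : HgFrom Γ (impl ψ φ) := by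
  induction h with
  | @assum φ hm =>
    rcases hm with rfl | hm
    · exact .thm (.taut (tautId _))
    · exact .mp (.thm (.taut (tautK _ _))) (.assum hm)
  | thm ht => exact .mp (.thm (.taut (tautK _ _))) (.thm ht)
  | mp _ _ ih1 ih2 => exact .mp (.mp (.thm (.taut (tautS _ _ _))) ih1) ih2
  | @garch φ' χ n rs r hr0 hr1 hq _ ih =>
    have ih' : ∀ s : ℚ, 0 ≤ s → s < r →
        HgFrom Γ (impl (ψ.conj χ) (nextn n (probs rs (prob s φ')))) := fun s hs0 hsr =>
      .mp (.thm (.taut (tautUncurry _ _ _))) (ih s hs0 hsr)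
    exact .mp (.thm (.taut (tautCurry _ _ _))) (HgFrom.garch hr0 hr1 hq ih')

/-- From a finite subset of a saturated set one cannot derive falsum. -/
lemma DPLF.Saturated.noderive {w : Set DPLF} (hs : Saturated w) {Γ : Set DPLF}
    (hΓ : Γ ⊆ w) (hfin : Γ.Finite) (hd : HgFrom Γ falsum) : False :=
  hs.fincon Γ hΓ hfin hd

/-- Saturated sets are closed under derivability. -/
lemma DPLF.Saturated.closed {w : Set DPLF} (hs : Saturated w) {φ : DPLF}
    (h : HgFrom w φ) : φ ∈ w := by
  induction h with
  | assum hm => exact hm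
  | @thm φ ht =>
    rcases hs.negcomplete φ with h | h
    · exact h
    · exact absurd (HgFrom.mp (.mp (.thm (.taut (tautEF φ))) (.thm ht))
        (.assum (Set.mem_singleton _)))
        (hs.fincon {φ.neg} (Set.singleton_subset_iff.2 h) (Set.finite_singleton _))
  | @mp φ χ _ _ ih1 ih2 =>
    rcases hs.negcomplete χ with h | h
    · exact h
    · exact absurd
        (HgFrom.mp (.mp (.thm (.taut (tautEF χ)))
            (.mp (.assum (show impl φ χ ∈ ({impl φ χ, φ, χ.neg} : Set DPLF) by simp))
              (.assum (by simp))))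
          (.assum (show χ.neg ∈ ({impl φ χ, φ, χ.neg} : Set DPLF) by simp)))
        (hs.fincon {impl φ χ, φ, χ.neg}
          (by intro x hx; rcases hx with rfl | rfl | rfl <;> assumption)
          (((Set.finite_singleton _).insert _).insert _))
  | @garch φ' ψ n rs r hr0 hr1 hq _ ih =>
    set θ : ℚ → DPLF := fun s => nextn n (probs rs (prob s φ')) with hθ
    rcases hs.negcomplete ψ with hψ | hψ
    · -- ψ ∈ w : each θ s ∈ w, then θ r ∈ w by archProp
      have hθs : ∀ s : ℚ, 0 ≤ s → s < r → θ s ∈ w := by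
        intro s hs0 hsr
        rcases hs.negcomplete (θ s) with h | h
        · exact h
        · exact absurd
            (HgFrom.mp (.mp (.thm (.taut (tautEF (θ s))))
                (.mp (.assum (show impl ψ (θ s) ∈ ({impl ψ (θ s), ψ, (θ s).neg} : Set DPLF) by simp))
                  (.assum (by simp))))
              (.assum (show (θ s).neg ∈ ({impl ψ (θ s), ψ, (θ s).neg} : Set DPLF) by simp)))
            (hs.fincon {impl ψ (θ s), ψ, (θ s).neg}
              (by intro x hx; rcases hx with rfl | rfl | rfl
                  · exact ih s hs0 hsr
                  · exact hψ
                  · exact h)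
              (((Set.finite_singleton _).insert _).insert _))
      have hθr : θ r ∈ w := hs.archProp φ' n rs r hr0 hr1 hq hθs
      rcases hs.negcomplete (impl ψ (θ r)) with h | h
      · exact h
      · exact absurd
          (HgFrom.mp (.mp (.thm (.taut (tautEF (θ r))))
              (.assum (show θ r ∈ ({θ r, (impl ψ (θ r)).neg} : Set DPLF) by simp)))
            (.mp (.thm (.taut (tautNotImp2 ψ (θ r)))) (.assum (by simp))))
          (hs.fincon {θ r, (impl ψ (θ r)).neg}
            (by intro x hx; rcases hx with rfl | rfl
                · exact hθr
                · exact h)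
            ((Set.finite_singleton _).insert _))
    · -- ψ.neg ∈ w
      rcases hs.negcomplete (impl ψ (θ r)) with h | h
      · exact h
      · exact absurd
          (HgFrom.mp (.mp (.thm (.taut (tautEF ψ)))
              (.mp (.thm (.taut (tautNotImp1 ψ (θ r))))
                (.assum (show (impl ψ (θ r)).neg ∈ ({ψ.neg, (impl ψ (θ r)).neg} : Set DPLF) by simp))))
            (.assum (by simp)))
          (hs.fincon {ψ.neg, (impl ψ (θ r)).neg}
            (by intro x hx; rcases hx with rfl | rfl
                · exact hψ
                · exact h)
            ((Set.finite_singleton _).insert _))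

end Aux

open DPLF in
/-- a set of formulas is saturated iff it is maximally consistent in H_DPL. -/
theorem stmt7 (w : Set DPLF) :
    Saturated w ↔
      (GConsistent w ∧ ∀ w' : Set DPLF, w ⊆ w' → GConsistent w' → w' = w) := by
  constructor
  · intro hs
    refine ⟨?_, ?_⟩
    · intro hd
      have hf : falsum ∈ w := hs.closed hd
      exact hs.noderive (Set.singleton_subset_iff.2 hf) (Set.finite_singleton _)
        (.assum (Set.mem_singleton _))
    · intro w' hsub hcon
      refine Set.Subset.antisymm ?_ hsub
      intro φ hφ
      by_contra hne
      have hneg : φ.neg ∈ w := (hs.negcomplete φ).resolve_left hne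
      exact hcon (HgFrom.mp (.mp (.thm (.taut (tautEF φ))) (.assum hφ))
        (.assum (hsub hneg)))
  · rintro ⟨hcon, hmax⟩
    have closed : ∀ φ : DPLF, HgFrom w φ → φ ∈ w := by
      intro φ hφ
      have hcon' : GConsistent (insert φ w) := by
        intro hd
        exact hcon (HgFrom.mp (hgfrom_deduction hd) hφ)
      have heq := hmax (insert φ w) (Set.subset_insert _ _) hcon'
      rw [← heq]; exact Set.mem_insert _ _
    refine ⟨?_, ?_, ?_⟩
    · intro Γ hΓ _ hd
      exact hcon (hgfrom_mono hΓ hd)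
    · intro φ
      by_contra h
      push_neg at h
      obtain ⟨h1, h2⟩ := h
      have hd1 : HgFrom (insert φ w) falsum := by
        by_contra hc
        have heq := hmax (insert φ w) (Set.subset_insert _ _) hc
        exact h1 (heq ▸ Set.mem_insert φ w)
      have hd2 : HgFrom (insert φ.neg w) falsum := by
        by_contra hc
        have heq := hmax (insert φ.neg w) (Set.subset_insert _ _) hc
        exact h2 (heq ▸ Set.mem_insert φ.neg w)
      exact hcon (HgFrom.mp (.mp (.thm (.taut (tautCases φ)))
        (hgfrom_deduction hd1)) (hgfrom_deduction hd2))
    · intro φ n rs r hr0 hr1 hq hmem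
      have hprem : ∀ s : ℚ, 0 ≤ s → s < r →
          HgFrom w (impl falsum.neg (nextn n (probs rs (prob s φ)))) := fun s hs0 hsr =>
        .mp (.thm (.taut (tautK _ _))) (.assum (hmem s hs0 hsr))
      have hg := HgFrom.garch hr0 hr1 hq hprem
      exact closed _ (.mp hg (.thm (.taut tautTop)))
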